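/- Under the null hypothesis that F = G with F continuous, the variance of the Mann–Whitney statistic is Var(U_{mn}) = m n (m + n + 1) / 12. -/

import Mathlib

open MeasureTheory ProbabilityTheory Set

/-!
Write `U = ∑ A_{ij}` with `A_{ij} = 1{Y_j ≤ X_i}`, so that `Var U = ∑ Cov(A_{ij}, A_{kl})`.
The `m + n` observations are iid with an atomless law, so ties are null and all orderings of
distinct observations are equally likely: `E A_{ij} = 1/2`, and an observation is the largest
(or smallest) of three with probability `1/3`. Hence `Cov(A_{ij}, A_{kl})` is `1/4` when
`(i, j) = (k, l)`, `1/3 - 1/4 = 1/12` when exactly one index is shared, and `0` otherwise by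
independence; summing gives `mn (1/4 + (n - 1)/12 + (m - 1)/12) = mn (m + n + 1)/12`.
-/

lemma integral_comp_eq_inv_card {Ω β κ : Type*} [MeasurableSpace Ω] [MeasurableSpace β]
    [Fintype κ] {μ : Measure Ω} [IsProbabilityMeasure μ] {ρ : Measure β}
    {φ : κ → Ω → β} (hφ : ∀ i, Measurable (φ i)) (hlaw : ∀ i, μ.map (φ i) = ρ)
    {g : β → ℝ} (hg : Integrable g ρ) (hsum : ∀ᵐ ω ∂μ, ∑ i, g (φ i ω) = 1) (i : κ) :
    ∫ ω, g (φ i ω) ∂μ = (Fintype.card κ : ℝ)⁻¹ := by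
  have hint : ∀ j, Integrable (fun ω => g (φ j ω)) μ := fun j =>
    ((hlaw j).symm ▸ hg).comp_measurable (hφ j)
  have hmean : ∀ j, ∫ ω, g (φ j ω) ∂μ = ∫ x, g x ∂ρ := fun j => by
    rw [← hlaw j, integral_map (hφ j).aemeasurable (hlaw j ▸ hg.aestronglyMeasurable)]
  have htotal : ∑ j, ∫ ω, g (φ j ω) ∂μ = 1 := by
    rw [← integral_finsetSum _ fun j _ => hint j, integral_congr_ae hsum]
    simp
  simp only [hmean, Finset.sum_const, Finset.card_univ, nsmul_eq_mul] at htotal ⊢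
  exact eq_inv_of_mul_eq_one_right htotal

section Indicators

variable {α : Type*} [LinearOrder α] {x y z : α}

lemma ite_le_add_ite_le_eq_one (hxy : x ≠ y) :
    (if y ≤ x then (1 : ℝ) else 0) + (if x ≤ y then 1 else 0) = 1 := by
  rcases hxy.lt_or_gt with h | h <;> simp [h.le, h.not_ge]

lemma ite_isMax_sum_eq_one (hxy : x ≠ y) (hxz : x ≠ z) (hyz : y ≠ z) :
    (if y ≤ x then (1 : ℝ) else 0) * (if z ≤ x then 1 else 0)
      + (if x ≤ y then 1 else 0) * (if z ≤ y then 1 else 0)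
      + (if x ≤ z then 1 else 0) * (if y ≤ z then 1 else 0) = 1 := by
  rcases hxy.lt_or_gt with h | h <;> rcases hxz.lt_or_gt with h' | h' <;>
    rcases hyz.lt_or_gt with h'' | h'' <;>
      simp [h.le, h.not_ge, h'.le, h'.not_ge, h''.le, h''.not_ge] <;> order

lemma ite_isMin_sum_eq_one (hxy : x ≠ y) (hxz : x ≠ z) (hyz : y ≠ z) :
    (if x ≤ y then (1 : ℝ) else 0) * (if x ≤ z then 1 else 0)
      + (if y ≤ x then 1 else 0) * (if y ≤ z then 1 else 0)
      + (if z ≤ x then 1 else 0) * (if z ≤ y then 1 else 0) = 1 :=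
  ite_isMax_sum_eq_one (α := αᵒᵈ) hxy hxz hyz

variable {Ω : Type*} [MeasurableSpace Ω] {f g : Ω → ℝ}

lemma measurable_ite_le (hf : Measurable f) (hg : Measurable g) :
    Measurable fun ω => if f ω ≤ g ω then (1 : ℝ) else 0 :=
  Measurable.ite (measurableSet_le hf hg) measurable_const measurable_const

lemma memLp_ite_le {μ : Measure Ω} [IsFiniteMeasure μ] (hf : Measurable f) (hg : Measurable g)
    (p : ENNReal) : MemLp (fun ω => if f ω ≤ g ω then (1 : ℝ) else 0) p μ :=
  MemLp.of_bound (measurable_ite_le hf hg).aestronglyMeasurable 1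
    (ae_of_all _ fun ω => by split_ifs <;> simp)

end Indicators

lemma sum_sum_ite_eq_fst_add_ite_eq_snd {α β : Type*} [Fintype α] [Fintype β] [DecidableEq α]
    [DecidableEq β] :
    ∑ p : α × β, ∑ q : α × β, ((if p.1 = q.1 then (1 : ℝ) else 0) + (if p.2 = q.2 then 1 else 0)
      + (if p = q then 1 else 0))
      = Fintype.card α * Fintype.card β * (Fintype.card α + Fintype.card β + 1) := by
  have hfst : ∀ a : α, ∑ q : α × β, (if a = q.1 then (1 : ℝ) else 0) = Fintype.card β := by
    intro a
    rw [Fintype.sum_prod_type, Finset.sum_comm]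
    simp
  have hsnd : ∀ b : β, ∑ q : α × β, (if b = q.2 then (1 : ℝ) else 0) = Fintype.card α := by
    intro b
    rw [Fintype.sum_prod_type]
    simp
  simp only [Finset.sum_add_distrib, hfst, hsnd, Finset.sum_ite_eq, Finset.mem_univ, if_true,
    Finset.sum_const, Finset.card_univ, Fintype.card_prod, nsmul_eq_mul]
  push_cast
  ring

structure IsIID {ι Ω β : Type*} [MeasurableSpace Ω] [MeasurableSpace β]
    (Z : ι → Ω → β) (ν : Measure β) (μ : Measure Ω) : Prop where
  measurable : ∀ i, Measurable (Z i)
  map_eq : ∀ i, μ.map (Z i) = ν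
  iIndepFun : iIndepFun Z μ

namespace IsIID

section General

variable {ι Ω β : Type*} [MeasurableSpace Ω] [MeasurableSpace β] {μ : Measure Ω}
  [IsProbabilityMeasure μ] {Z : ι → Ω → β} {ν : Measure β} {a b c : ι}

lemma map_prodMk (hZ : IsIID Z ν μ) (hab : a ≠ b) :
    μ.map (fun ω => (Z a ω, Z b ω)) = ν.prod ν := by
  rw [(indepFun_iff_map_prod_eq_prod_map_map (hZ.measurable a).aemeasurable
    (hZ.measurable b).aemeasurable).mp (hZ.iIndepFun.indepFun hab), hZ.map_eq a, hZ.map_eq b]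

lemma map_prodMk_prodMk (hZ : IsIID Z ν μ) (hab : a ≠ b) (hac : a ≠ c) (hbc : b ≠ c) :
    μ.map (fun ω => (Z a ω, Z b ω, Z c ω)) = ν.prod (ν.prod ν) := by
  have h : IndepFun (Z a) (fun ω => (Z b ω, Z c ω)) μ :=
    (hZ.iIndepFun.indepFun_prodMk hZ.measurable b c a hab.symm hac.symm).symm
  rw [(indepFun_iff_map_prod_eq_prod_map_map (hZ.measurable a).aemeasurable
    ((hZ.measurable b).prodMk (hZ.measurable c)).aemeasurable).mp h, hZ.map_eq a,
    hZ.map_prodMk hbc]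

lemma ae_ne [MeasurableEq β] [SFinite ν] [NullSingletonClass ν] (hZ : IsIID Z ν μ)
    (hab : a ≠ b) : ∀ᵐ ω ∂μ, Z a ω ≠ Z b ω := by
  have h : ∀ᵐ p ∂(ν.prod ν), p.1 ≠ p.2 :=
    (Measure.ae_prod_iff_ae_ae (measurableSet_eq_fun measurable_fst measurable_snd).compl).2
      (ae_of_all _ fun x => (ν.ae_ne x).mono fun _ hy => hy.symm)
  rw [← hZ.map_prodMk hab] at h
  exact ae_of_ae_map ((hZ.measurable a).prodMk (hZ.measurable b)).aemeasurable h

end General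

section Real

variable {ι Ω : Type*} [MeasurableSpace Ω] {μ : Measure Ω} [IsProbabilityMeasure μ]
  {Z : ι → Ω → ℝ} {ν : Measure ℝ} [IsFiniteMeasure ν] [NullSingletonClass ν] {a b c d : ι}

lemma integral_ite_le (hZ : IsIID Z ν μ) (hab : a ≠ b) :
    ∫ ω, (if Z b ω ≤ Z a ω then (1 : ℝ) else 0) ∂μ = 1 / 2 := by
  have h := integral_comp_eq_inv_card (μ := μ) (ρ := ν.prod ν)
    (φ := ![fun ω => (Z a ω, Z b ω), fun ω => (Z b ω, Z a ω)])
    (g := fun p => if p.2 ≤ p.1 then (1 : ℝ) else 0)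
    (fun i => by
      fin_cases i
      exacts [(hZ.measurable a).prodMk (hZ.measurable b),
        (hZ.measurable b).prodMk (hZ.measurable a)])
    (fun i => by
      fin_cases i
      exacts [hZ.map_prodMk hab, hZ.map_prodMk hab.symm])
    ((memLp_ite_le measurable_snd measurable_fst 1).integrable le_rfl)
    ((hZ.ae_ne hab).mono fun ω h => by
      simp only [Fin.sum_univ_two]; exact ite_le_add_ite_le_eq_one h) 0
  simpa using h

lemma integral_comp_prodMk_prodMk (hZ : IsIID Z ν μ) (hab : a ≠ b) (hac : a ≠ c) (hbc : b ≠ c)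
    {g : ℝ × ℝ × ℝ → ℝ} (hg : Integrable g (ν.prod (ν.prod ν)))
    (hsum : ∀ x y z, x ≠ y → x ≠ z → y ≠ z → g (x, y, z) + g (y, x, z) + g (z, x, y) = 1) :
    ∫ ω, g (Z a ω, Z b ω, Z c ω) ∂μ = 1 / 3 := by
  have hZm := hZ.measurable
  have h := integral_comp_eq_inv_card (μ := μ) (hg := hg)
    (φ := ![fun ω => (Z a ω, Z b ω, Z c ω), fun ω => (Z b ω, Z a ω, Z c ω),
      fun ω => (Z c ω, Z a ω, Z b ω)])
    (fun i => by
      fin_cases i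
      exacts [(hZm a).prodMk ((hZm b).prodMk (hZm c)), (hZm b).prodMk ((hZm a).prodMk (hZm c)),
        (hZm c).prodMk ((hZm a).prodMk (hZm b))])
    (fun i => by
      fin_cases i
      exacts [hZ.map_prodMk_prodMk hab hac hbc, hZ.map_prodMk_prodMk hab.symm hbc hac,
        hZ.map_prodMk_prodMk hac.symm hbc.symm hab])
    (((hZ.ae_ne hab).and ((hZ.ae_ne hac).and (hZ.ae_ne hbc))).mono fun ω h => by
      simp only [Fin.sum_univ_three]; exact hsum _ _ _ h.1 h.2.1 h.2.2) 0
  simpa using h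

lemma integral_ite_le_mul_ite_le (hZ : IsIID Z ν μ) (hab : a ≠ b) (hac : a ≠ c) (hbc : b ≠ c) :
    ∫ ω, (if Z b ω ≤ Z a ω then (1 : ℝ) else 0) * (if Z c ω ≤ Z a ω then 1 else 0) ∂μ
      = 1 / 3 :=
  hZ.integral_comp_prodMk_prodMk (g := fun p =>
      (if p.2.1 ≤ p.1 then (1 : ℝ) else 0) * (if p.2.2 ≤ p.1 then 1 else 0)) hab hac hbc
    ((memLp_ite_le (measurable_fst.comp measurable_snd) measurable_fst 2).integrable_mul
      (memLp_ite_le (measurable_snd.comp measurable_snd) measurable_fst 2))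
    fun _ _ _ => ite_isMax_sum_eq_one

lemma integral_ite_ge_mul_ite_ge (hZ : IsIID Z ν μ) (hab : a ≠ b) (hac : a ≠ c) (hbc : b ≠ c) :
    ∫ ω, (if Z a ω ≤ Z b ω then (1 : ℝ) else 0) * (if Z a ω ≤ Z c ω then 1 else 0) ∂μ
      = 1 / 3 :=
  hZ.integral_comp_prodMk_prodMk (g := fun p =>
      (if p.1 ≤ p.2.1 then (1 : ℝ) else 0) * (if p.1 ≤ p.2.2 then 1 else 0)) hab hac hbc
    ((memLp_ite_le measurable_fst (measurable_fst.comp measurable_snd) 2).integrable_mul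
      (memLp_ite_le measurable_fst (measurable_snd.comp measurable_snd) 2))
    fun _ _ _ => ite_isMin_sum_eq_one

lemma covariance_ite_le [DecidableEq ι] (hZ : IsIID Z ν μ) (hab : a ≠ b) (hcd : c ≠ d)
    (had : a ≠ d) (hbc : b ≠ c) :
    cov[fun ω => if Z b ω ≤ Z a ω then (1 : ℝ) else 0,
      fun ω => if Z d ω ≤ Z c ω then (1 : ℝ) else 0; μ]
      = ((if a = c then 1 else 0) + (if b = d then 1 else 0) + (if a = c ∧ b = d then 1 else 0))
        / 12 := by
  have hZm := hZ.measurable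
  by_cases hac : a = c <;> by_cases hbd : b = d
  · subst hac hbd
    rw [covariance_eq_sub (memLp_ite_le (hZm b) (hZm a) 2) (memLp_ite_le (hZm b) (hZm a) 2)]
    simp only [Pi.mul_apply, ite_zero_mul_ite_zero, and_self, mul_one, hZ.integral_ite_le hab]
    norm_num
  · subst hac
    rw [covariance_eq_sub (memLp_ite_le (hZm b) (hZm a) 2) (memLp_ite_le (hZm d) (hZm a) 2)]
    simp only [Pi.mul_apply, hZ.integral_ite_le_mul_ite_le hab had hbd, hZ.integral_ite_le hab,
      hZ.integral_ite_le hcd]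
    norm_num [hbd]
  · subst hbd
    rw [covariance_eq_sub (memLp_ite_le (hZm b) (hZm a) 2) (memLp_ite_le (hZm b) (hZm c) 2)]
    simp only [Pi.mul_apply, hZ.integral_ite_ge_mul_ite_ge hab.symm hbc hac,
      hZ.integral_ite_le hab, hZ.integral_ite_le hcd]
    norm_num [hac]
  · have hind : IndepFun (fun ω => if Z b ω ≤ Z a ω then (1 : ℝ) else 0)
        (fun ω => if Z d ω ≤ Z c ω then (1 : ℝ) else 0) μ :=
      (hZ.iIndepFun.indepFun_prodMk_prodMk hZm a b c d hac had hbc hbd).comp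
        (measurable_ite_le measurable_snd measurable_fst)
        (measurable_ite_le measurable_snd measurable_fst)
    rw [hind.covariance_eq_zero (memLp_ite_le (hZm b) (hZm a) 2) (memLp_ite_le (hZm d) (hZm c) 2)]
    simp [hac, hbd]

end Real

end IsIID

/-- Under the null hypothesis `F = G` with `F` continuous, the variance of the
Mann–Whitney statistic is `Var(U_{mn}) = m n (m + n + 1) / 12`. -/
theorem stmt_6 {Ω : Type*} [MeasurableSpace Ω] (μ : Measure Ω) [IsProbabilityMeasure μ]
    (m n : ℕ) (Xs : Fin m → Ω → ℝ) (Ys : Fin n → Ω → ℝ)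
    (hXs : ∀ i, Measurable (Xs i)) (hYs : ∀ j, Measurable (Ys j))
    (ν : Measure ℝ) [IsProbabilityMeasure ν]
    (hatomless : ∀ x : ℝ, ν {x} = 0)
    (hlawX : ∀ i, μ.map (Xs i) = ν) (hlawY : ∀ j, μ.map (Ys j) = ν)
    (hindep : iIndepFun (Sum.elim Xs Ys) μ) :
    variance (fun a => ∑ i, ∑ j, if Xs i a ≥ Ys j a then (1 : ℝ) else 0) μ
      = m * n * ((m : ℝ) + n + 1) / 12 := by
  have : NullSingletonClass ν := ⟨hatomless⟩
  have hZ : IsIID (Sum.elim Xs Ys) ν μ := ⟨Sum.rec hXs hYs, Sum.rec hlawX hlawY, hindep⟩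
  have hcov : ∀ p q : Fin m × Fin n,
      cov[fun ω => if Ys p.2 ω ≤ Xs p.1 ω then (1 : ℝ) else 0,
        fun ω => if Ys q.2 ω ≤ Xs q.1 ω then (1 : ℝ) else 0; μ]
        = ((if p.1 = q.1 then 1 else 0) + (if p.2 = q.2 then 1 else 0)
          + (if p = q then 1 else 0)) / 12 := fun p q => by
    refine (hZ.covariance_ite_le (a := Sum.inl p.1) (b := Sum.inr p.2) (c := Sum.inl q.1)
      (d := Sum.inr q.2) Sum.inl_ne_inr Sum.inl_ne_inr Sum.inl_ne_inr Sum.inr_ne_inl).trans ?_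
    simp [Prod.ext_iff]
  simp only [ge_iff_le, ← Fintype.sum_prod_type']
  rw [variance_fun_sum
    (X := fun (p : Fin m × Fin n) ω => if Ys p.2 ω ≤ Xs p.1 ω then (1 : ℝ) else 0)
    fun p => memLp_ite_le (hYs p.2) (hXs p.1) 2]
  simp only [hcov, ← Finset.sum_div, sum_sum_ite_eq_fst_add_ite_eq_snd, Fintype.card_fin]
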